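/- arXiv:2101.06817 — 4 statements merged into one kernel-verified Lean document; each statement's English description precedes it below -/
import Mathlib

section
/- Fix n ≥ 2 and t ∈ ℂ∖{0} with q = t^n. Let V = ℂ^n with basis e^1,…,e^n and dual basis e*_1,…,e*_n. For λ ∈ ℂ∖{0}, define the linear form d′(λ) : V⊗V* → ℂ by d′(λ)(e^i⊗e*_j) = (−1)^{n−1} λ^{-1} q^{n−2i+1} δ_{ij}, define the matrix U_λ ∈ M_n(ℂ) by (U_λ)_{i, n+1−i} = λ(−q)^{i−n} and all other entries 0, and set ζ̄ = (−1)^{n−1} t^{1−n²}. Then the following are equivalent: (a) d′(λ)( e^i ⊗ (−q)^{n−j} e*_{n−j+1} ) = (ζ̄^{-1} U_λ)_{j,i} for all 1 ≤ i, j ≤ n; (b) λ² = t^{1−n} (i.e., λ = ± q^{(1−n)/2n}). -/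
private lemma aux_sdp (n j : ℕ) (hn : 2 ≤ n) (hj : j < n) (t lam : ℂ) (ht : t ≠ 0) (hlam : lam ≠ 0) :
    (-(t^n) : ℂ) ^ (n - 1 - j) *
        ((-1 : ℂ)^(n-1) * lam⁻¹ * (t^n : ℂ) ^ ((n:ℤ) - 2*(((n-1-j : ℕ) : ℤ)+1)+1))
      = ((-1:ℂ)^(n-1) * t ^ ((1:ℤ) - (n:ℤ)^2))⁻¹ * (lam * (-(t^n) : ℂ)^(((j:ℤ)+1)-(n:ℤ)))
    ↔ lam ^ 2 = t ^ ((1:ℤ)-(n:ℤ)) := by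
  have hq : (t^n : ℂ) ≠ 0 := pow_ne_zero _ ht
  have hcast : ((n - 1 - j : ℕ) : ℤ) = (n:ℤ) - 1 - j := by omega
  have hL : (-(t^n) : ℂ) ^ (n - 1 - j) *
        ((-1 : ℂ)^(n-1) * lam⁻¹ * (t^n : ℂ) ^ ((n:ℤ) - 2*(((n-1-j : ℕ) : ℤ)+1)+1))
      = (-1:ℂ)^((n-1-j)+(n-1)) * lam⁻¹ * t ^ ((n:ℤ)^2 - n*((n:ℤ)-1-(j:ℤ)) - n) := by
    rw [neg_pow, hcast]
    rw [show (t^n : ℂ) ^ ((n:ℤ) - 2*(((n:ℤ) - 1 - j)+1)+1) = t ^ ((n:ℤ) * ((n:ℤ) - 2*(((n:ℤ) - 1 - j)+1)+1)) by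
      rw [← zpow_natCast t n, ← zpow_mul]]
    rw [show ((t:ℂ)^n)^(n-1-j) = t ^ ((n:ℤ) * ((n:ℤ)-1-j)) by
      rw [← pow_mul, ← zpow_natCast t (n*(n-1-j))]; congr 1; push_cast [hcast]; ring]
    rw [pow_add,
      show (n:ℤ)^2 - n*((n:ℤ)-1-(j:ℤ)) - n
        = (n:ℤ) * ((n:ℤ)-1-j) + (n:ℤ) * ((n:ℤ) - 2*(((n:ℤ) - 1 - j)+1)+1) by ring,
      zpow_add₀ ht]
    ring
  have hR : ((-1:ℂ)^(n-1) * t ^ ((1:ℤ) - (n:ℤ)^2))⁻¹ * (lam * (-(t^n) : ℂ)^(((j:ℤ)+1)-(n:ℤ)))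
      = (-1:ℂ)^((n-1-j)+(n-1)) * lam * t ^ ((n:ℤ)^2 - 1 + n*((j:ℤ)+1-(n:ℤ))) := by
    rw [show (-(t^n) : ℂ) = (-1) * t^n by ring, mul_zpow,
      show ((t:ℂ)^n) ^ (((j:ℤ)+1)-(n:ℤ)) = t ^ ((n:ℤ) * ((j:ℤ)+1-(n:ℤ))) by
        rw [← zpow_natCast t n, ← zpow_mul],
      mul_inv, ← zpow_neg,
      show ((-1:ℂ)^(n-1))⁻¹ = (-1:ℂ)^(n-1) by
        rw [← inv_pow]; norm_num,
      show ((-1:ℂ)) ^ (((j:ℤ)+1)-(n:ℤ)) = ((-1:ℂ))^(n-1-j) by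
        rw [show (((j:ℤ)+1)-(n:ℤ)) = -((n:ℤ)-1-j) by ring, zpow_neg, ← hcast,
          zpow_natCast, ← inv_pow]; norm_num,
      show (n:ℤ)^2 - 1 + n*((j:ℤ)+1-(n:ℤ)) = -((1:ℤ) - (n:ℤ)^2) + (n:ℤ) * ((j:ℤ)+1-(n:ℤ)) by ring,
      zpow_add₀ ht, pow_add]
    ring
  rw [hL, hR]
  constructor
  · intro h
    have hs : ((-1:ℂ)^((n-1-j)+(n-1))) ≠ 0 := pow_ne_zero _ (by norm_num)
    rw [mul_assoc, mul_assoc] at h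
    have h3 := mul_left_cancel₀ hs h
    set A : ℤ := (n:ℤ)^2 - n*((n:ℤ)-1-(j:ℤ)) - n with hA
    set B : ℤ := (n:ℤ)^2 - 1 + n*((j:ℤ)+1-(n:ℤ)) with hB
    have hBne : (t : ℂ)^B ≠ 0 := zpow_ne_zero _ ht
    have key : lam^2 * t^B = t^A := by
      calc lam^2 * t^B = lam * (lam * t^B) := by ring
        _ = lam * (lam⁻¹ * t^A) := by rw [h3]
        _ = t^A := by field_simp
    have h4 : lam^2 = t^A / t^B := by rw [eq_div_iff hBne]; exact key
    rw [h4, ← zpow_sub₀ ht]; congr 1; rw [hA, hB]; ring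
  · intro h
    have h2 : lam⁻¹ = lam * t ^ (-((1:ℤ)-(n:ℤ))) := by
      rw [zpow_neg, ← h]; field_simp
    rw [mul_assoc, mul_assoc, h2]
    rw [show (n:ℤ)^2 - 1 + n*((j:ℤ)+1-(n:ℤ)) = -((1:ℤ)-(n:ℤ)) + ((n:ℤ)^2 - n*((n:ℤ)-1-(j:ℤ)) - n) by ring, zpow_add₀ ht]
    ring


/-- Characterization of the symmetrized duality parameter: with `q = tⁿ`, the right
duality evaluation `d′(λ)(e^i⊗e*_j) = (-1)^{n-1} λ⁻¹ q^{n-2i+1} δ_{ij}` matches the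
matrix `ζ̄⁻¹ U_λ` (where `(U_λ)_{i,n+1-i} = λ(-q)^{i-n}` and
`ζ̄ = (-1)^{n-1} t^{1-n²}`) on the basis vectors `e^i ⊗ (-q)^{n-j} e*_{n-j+1}`
if and only if `λ² = t^{1-n}` (i.e. `λ = ± q^{(1-n)/2n}`).  Indices are 0-based. -/
theorem symmetrized_duality_parameter
    (n : ℕ) (hn : 2 ≤ n) (t : ℂ) (ht : t ≠ 0) (lam : ℂ) (hlam : lam ≠ 0) :
    let q : ℂ := t ^ n
    let zbar : ℂ := (-1 : ℂ) ^ (n - 1) * t ^ ((1 : ℤ) - (n : ℤ) ^ 2)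
    (∀ i j : Fin n,
        (-q) ^ (n - 1 - (j : ℕ)) *
          (if (i : ℕ) = n - 1 - (j : ℕ) then
              (-1 : ℂ) ^ (n - 1) * lam⁻¹ * q ^ ((n : ℤ) - 2 * ((i : ℤ) + 1) + 1)
            else 0)
        = zbar⁻¹ *
          (if (i : ℕ) = n - 1 - (j : ℕ) then lam * (-q) ^ (((j : ℤ) + 1) - n) else 0))
    ↔ lam ^ 2 = t ^ ((1 : ℤ) - (n : ℤ)) := by
  intro q zbar
  constructor
  · intro h
    have h0 := h ⟨n-1, by omega⟩ ⟨0, by omega⟩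
    rw [if_pos (by simp), if_pos (by simp)] at h0
    exact (aux_sdp n 0 hn (by omega) t lam ht hlam).mp h0
  · intro h i j
    by_cases hij : (i : ℕ) = n - 1 - (j : ℕ)
    · rw [if_pos hij, if_pos hij,
        show ((i : ℤ)) = ((n - 1 - (j : ℕ) : ℕ) : ℤ) from by exact_mod_cast hij]
      exact (aux_sdp n j hn j.isLt t lam ht hlam).mpr h
    · rw [if_neg hij, if_neg hij, mul_zero, mul_zero]
end

section
/- Fix n ≥ 2, t ∈ ℂ∖{0}, q = t^n. Let V = ℂ^n with basis e^1,…,e^n and dual basis e*_1,…,e*_n. Define c̄_{V,V} : V⊗V → V⊗V and c̄_{V*,V*} : V*⊗V* → V*⊗V* by: c̄_{V,V}(e^i⊗e^i)=t q^{-1} e^i⊗e^i, c̄_{V,V}(e^i⊗e^j)=t((q^{-1}−q)e^i⊗e^j+e^j⊗e^i) for i<j, c̄_{V,V}(e^i⊗e^j)=t e^j⊗e^i for i>j; and c̄_{V*,V*}(e*_i⊗e*_i)=t q^{-1} e*_i⊗e*_i, c̄_{V*,V*}(e*_i⊗e*_j)=t((q^{-1}−q)e*_i⊗e*_j+e*_j⊗e*_i)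 for i>j, c̄_{V*,V*}(e*_i⊗e*_j)=t e*_j⊗e*_i for i<j. Define the bases (β_{V,V})_{ij} = e^i⊗e^j and (β_{V*,V*})_{ij} = (−q)^{n−i} e*_{n−i+1} ⊗ (−q)^{n−j} e*_{n−j+1}. Then the matrix of c̄_{V,V} with respect to β_{V,V} equals the matrix of c̄_{V*,V*} with respect to β_{V*,V*} (as n²×n² complex matrices). -/
/-- The matrix of `c̄_{V,V}` with respect to the basis `β_{V,V}` (`(β_{V,V})_{ij} = e^i⊗e^j`,
the standard basis) equals the matrix of `c̄_{V*,V*}` with respect to the basis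
`β_{V*,V*}` (`(β_{V*,V*})_{ij} = (-q)^{n-i} e*_{n-i+1} ⊗ (-q)^{n-j} e*_{n-j+1}`), where
`q = tⁿ`.  Here `C` is the matrix of `c̄_{V,V}` in the standard basis (equal to its matrix
in `β_{V,V}`), `Cstar` is the matrix of `c̄_{V*,V*}` in the dual-basis coordinates
`e*_i ⊗ e*_j`, and `B` is the (invertible) change-of-basis matrix whose columns are the
vectors `β_{V*,V*}` in those coordinates; the claim `Cstar·B = B·C` says precisely that
the matrix of `c̄_{V*,V*}` in the basis `β_{V*,V*}` is `C`.  Indices are 0-based. -/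
theorem dual_braiding_same_matrix (n : ℕ) (hn : 2 ≤ n) (t : ℂ) (ht : t ≠ 0) :
    let q : ℂ := t ^ n
    let C : Matrix (Fin n × Fin n) (Fin n × Fin n) ℂ := fun p p' =>
      if p'.1 = p'.2 then (if p = p' then t * q⁻¹ else 0)
      else if p'.1 < p'.2 then
        (if p = p' then t * (q⁻¹ - q) else if p = (p'.2, p'.1) then t else 0)
      else (if p = (p'.2, p'.1) then t else 0)
    let Cstar : Matrix (Fin n × Fin n) (Fin n × Fin n) ℂ := fun p p' =>
      if p'.1 = p'.2 then (if p = p' then t * q⁻¹ else 0)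
      else if p'.2 < p'.1 then
        (if p = p' then t * (q⁻¹ - q) else if p = (p'.2, p'.1) then t else 0)
      else (if p = (p'.2, p'.1) then t else 0)
    let μ : Fin n → ℂ := fun i => (-q) ^ (n - 1 - (i : ℕ))
    let B : Matrix (Fin n × Fin n) (Fin n × Fin n) ℂ := fun p a =>
      if (p.1 : ℕ) = n - 1 - (a.1 : ℕ) ∧ (p.2 : ℕ) = n - 1 - (a.2 : ℕ) then
        μ a.1 * μ a.2 else 0
    IsUnit B ∧ Cstar * B = B * C := by
  intro q C Cstar μ B
  have hq : q ≠ 0 := pow_ne_zero _ ht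
  have hμ : ∀ i : Fin n, μ i ≠ 0 := fun i => pow_ne_zero _ (neg_ne_zero.mpr hq)
  set r : Fin n → Fin n := fun i => ⟨n - 1 - (i : ℕ), by have := i.isLt; omega⟩ with hrdef
  have hval : ∀ i : Fin n, (r i : ℕ) = n - 1 - (i : ℕ) := fun i => rfl
  have hrr : ∀ i, r (r i) = i := by
    intro i; have := i.isLt
    apply Fin.ext; simp only [hval]; omega
  have hre : ∀ i j : Fin n, r i = r j ↔ i = j :=
    fun i j => ⟨fun h => by rw [← hrr i, h, hrr], fun h => by rw [h]⟩
  have hrlt : ∀ i j : Fin n, r i < r j ↔ j < i := by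
    intro i j; have hi := i.isLt; have hj := j.isLt
    simp only [Fin.lt_def, hval]; omega
  have hB : ∀ (x a : Fin n × Fin n), B x a = if x = (r a.1, r a.2) then μ a.1 * μ a.2 else 0 := by
    intro x a
    have hc : ((x.1 : ℕ) = n - 1 - (a.1 : ℕ) ∧ (x.2 : ℕ) = n - 1 - (a.2 : ℕ)) ↔
        x = (r a.1, r a.2) := by
      rw [Prod.ext_iff, Fin.ext_iff, Fin.ext_iff, hval, hval]
    simp only [B]
    exact if_congr hc rfl rfl
  have hB' : ∀ (p x : Fin n × Fin n),
      B p x = if x = (r p.1, r p.2) then μ (r p.1) * μ (r p.2) else 0 := by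
    intro p x
    rw [hB]
    by_cases h : x = (r p.1, r p.2)
    · subst h
      rw [if_pos rfl, if_pos (Prod.ext_iff.mpr ⟨(hrr p.1).symm, (hrr p.2).symm⟩)]
    · rw [if_neg h, if_neg]
      intro hc; apply h
      rw [Prod.ext_iff] at hc ⊢
      exact ⟨by rw [hc.1, hrr], by rw [hc.2, hrr]⟩
  have key : ∀ (c1 c2 a1 a2 : Fin n),
      Cstar (r c1, r c2) (r a1, r a2) = C (c1, c2) (a1, a2) := by
    intro c1 c2 a1 a2
    simp only [Cstar, C, hre, hrlt, Prod.mk.injEq]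
  constructor
  · -- IsUnit B
    set Binv : Matrix (Fin n × Fin n) (Fin n × Fin n) ℂ :=
      fun x y => if y = (r x.1, r x.2) then (μ x.1 * μ x.2)⁻¹ else 0 with hBinv
    have hmul : B * Binv = 1 := by
      ext p a
      rw [Matrix.mul_apply]
      rw [Finset.sum_eq_single ((r p.1, r p.2) : Fin n × Fin n)]
      · rw [hB']
        rw [if_pos rfl]
        simp only [Binv, hrr]
        by_cases h : a = p
        · subst h
          rw [if_pos (Prod.ext_iff.mpr ⟨rfl, rfl⟩)]
          rw [Matrix.one_apply_eq]
          exact div_self (mul_ne_zero (hμ _) (hμ _))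
        · rw [if_neg, Matrix.one_apply_ne (fun hh => h (hh.symm)), mul_zero]
          intro hc; apply h
          rw [Prod.ext_iff] at hc
          exact Prod.ext_iff.mpr ⟨hc.1, hc.2⟩
      · intro b _ hb
        rw [hB', if_neg hb, zero_mul]
      · intro h; exact absurd (Finset.mem_univ _) h
    exact ⟨⟨B, Binv, hmul, mul_eq_one_comm.mp hmul⟩, rfl⟩
  · ext p a
    rw [Matrix.mul_apply, Matrix.mul_apply]
    have lhs : ∑ x : Fin n × Fin n, Cstar p x * B x a
        = Cstar p (r a.1, r a.2) * (μ a.1 * μ a.2) := by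
      rw [Finset.sum_eq_single ((r a.1, r a.2) : Fin n × Fin n)]
      · rw [hB, if_pos rfl]
      · intro b _ hb
        rw [hB, if_neg, mul_zero]
        intro hc
        apply hb
        rw [Prod.ext_iff] at hc ⊢
        exact ⟨hc.1, hc.2⟩
      · intro h; exact absurd (Finset.mem_univ _) h
    have rhs : ∑ x : Fin n × Fin n, B p x * C x a
        = (μ (r p.1) * μ (r p.2)) * C (r p.1, r p.2) a := by
      rw [Finset.sum_eq_single ((r p.1, r p.2) : Fin n × Fin n)]
      · rw [hB', if_pos rfl]
      · intro b _ hb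
        rw [hB', if_neg hb, zero_mul]
      · intro h; exact absurd (Finset.mem_univ _) h
    rw [lhs, rhs]
    have hp : p = (r (r p.1), r (r p.2)) := Prod.ext_iff.mpr ⟨(hrr p.1).symm, (hrr p.2).symm⟩
    have ha : a = (a.1, a.2) := rfl
    rw [show Cstar p (r a.1, r a.2) = C (r p.1, r p.2) (a.1, a.2) by
      conv_lhs => rw [hp]
      exact key (r p.1) (r p.2) a.1 a.2]
    rw [← ha]
    -- now: C (r p.1, r p.2) a * (μ a.1 * μ a.2) = μ (r p.1) * μ (r p.2) * C (r p.1, r p.2) a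
    set c1 := r p.1
    set c2 := r p.2
    by_cases h1 : ((c1, c2) : Fin n × Fin n) = a
    · rw [show C (c1, c2) a * (μ a.1 * μ a.2) = μ a.1 * μ a.2 * C (c1, c2) a by ring]
      rw [← h1]
    · by_cases h2 : ((c1, c2) : Fin n × Fin n) = (a.2, a.1)
      · simp only [Prod.mk.injEq] at h2
        rw [h2.1, h2.2]; ring
      · have hz : C (c1, c2) a = 0 := by
          simp only [C]
          split_ifs with h3 h4 h5 h6 h7 <;> first
            | rfl
            | (exfalso; first
                | exact h1 h4
                | exact h1 h5
                | exact h2 (by rw [h6]; rfl)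
                | exact h2 (by rw [h7]; rfl)
                | skip)
        rw [hz]; ring
end

section
/- Work in the commutative Laurent polynomial ring R = ℂ[w^{±1}, z^{±1}, x^{±1}, z′^{±1}, w′^{±1}] with W = w³, Z = z³, X = x³, Z′ = z′³, W′ = w′³. Define L = (w z² x z′ w′²)^{-1}·[[WZXZ′W′, WZXW′+WZW′, WZ],[0, ZW′, Z],[0,0,1]], R̂ = (w′ z′² x^{-1} z w²)^{-1}·[[W′Z′ZW, 0, 0],[Z′ZW, Z′W, 0],[ZW, W + X^{-1}W, X^{-1}]], and J = [[0,0,1],[0,−1,0],[1,0,0]]. Then L · J · R̂ = J in M_3(R). (This is the classical q = 1 form of the SL_3 U-turn Move (I) identity.) -/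
/-- The classical `n = 3` left monodromy matrix `L(w,z,w',z',x)` (with `W = w³` etc.). -/
noncomputable def Lmat (R : Type*) [CommRing R] (w z w' z' x : Rˣ) :
    Matrix (Fin 3) (Fin 3) R :=
  (((w * z ^ 2 * x * z' * w' ^ 2)⁻¹ : Rˣ) : R) •
    !![(w : R) ^ 3 * (z : R) ^ 3 * (x : R) ^ 3 * (z' : R) ^ 3 * (w' : R) ^ 3,
       (w : R) ^ 3 * (z : R) ^ 3 * (x : R) ^ 3 * (w' : R) ^ 3
         + (w : R) ^ 3 * (z : R) ^ 3 * (w' : R) ^ 3,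
       (w : R) ^ 3 * (z : R) ^ 3;
       0, (z : R) ^ 3 * (w' : R) ^ 3, (z : R) ^ 3;
       0, 0, 1]

/-- The classical `n = 3` right monodromy matrix `R(w,z,w',z',x)`. -/
noncomputable def Rmat (R : Type*) [CommRing R] (w z w' z' x : Rˣ) :
    Matrix (Fin 3) (Fin 3) R :=
  (((w' * z' ^ 2 * x⁻¹ * z * w ^ 2)⁻¹ : Rˣ) : R) •
    !![(w' : R) ^ 3 * (z' : R) ^ 3 * (z : R) ^ 3 * (w : R) ^ 3, 0, 0;
       (z' : R) ^ 3 * (z : R) ^ 3 * (w : R) ^ 3, (z' : R) ^ 3 * (w : R) ^ 3, 0;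
       (z : R) ^ 3 * (w : R) ^ 3,
       (w : R) ^ 3 + ((x⁻¹ : Rˣ) : R) ^ 3 * (w : R) ^ 3,
       ((x⁻¹ : Rˣ) : R) ^ 3]

/-- The classical `q = 1` form of the `SL₃` U-turn Move (I) identity:
`L · J · R = J` where `J = [[0,0,1],[0,-1,0],[1,0,0]]` is the classical U-turn matrix. -/
theorem sl3_move_I_classical (R : Type*) [CommRing R] (w z x z' w' : Rˣ) :
    Lmat R w z w' z' x * !![0, 0, 1; 0, -1, 0; 1, 0, 0] * Rmat R w z w' z' x
      = !![(0 : R), 0, 1; 0, -1, 0; 1, 0, 0] := by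
  have ha := Units.mul_inv (w * z ^ 2 * x * z' * w' ^ 2)
  have hb := Units.mul_inv (w' * z' ^ 2 * x⁻¹ * z * w ^ 2)
  have hx := Units.mul_inv x
  simp only [Units.val_mul, Units.val_pow_eq_pow_val] at ha hb hx
  set a : R := (((w * z ^ 2 * x * z' * w' ^ 2)⁻¹ : Rˣ) : R) with hadef
  set b : R := (((w' * z' ^ 2 * x⁻¹ * z * w ^ 2)⁻¹ : Rˣ) : R) with hbdef
  set ix : R := ((x⁻¹ : Rˣ) : R) with hixdef
  have hx3 : (x : R) ^ 3 * ix ^ 3 = 1 := by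
    rw [← mul_pow, hx, one_pow]
  have hab : a * b * ((w : R) ^ 3 * (z : R) ^ 3 * (z' : R) ^ 3 * (w' : R) ^ 3) = 1 := by
    have h1 : ((w : R) * (z:R)^2 * (x:R) * (z':R) * (w':R)^2 * a) *
        ((w':R) * (z':R)^2 * ix * (z:R) * (w:R)^2 * b) = 1 * 1 := by rw [ha, hb]
    linear_combination h1 - (a * b * ((w : R) ^ 3 * (z : R) ^ 3 * (z' : R) ^ 3 * (w' : R) ^ 3)) * hx
  ext i j
  fin_cases i <;> fin_cases j <;>
    simp only [Lmat, Rmat, Matrix.mul_apply, Fin.sum_univ_three, Matrix.smul_apply,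
      Matrix.cons_val', Matrix.cons_val_zero, Matrix.cons_val_one, Matrix.head_cons,
      Matrix.empty_val', Matrix.cons_val_fin_one, Matrix.head_fin_const, smul_eq_mul,
      Fin.isValue, Fin.zero_eta, Fin.mk_one, Fin.reduceFinMk, ← hadef, ← hbdef, ← hixdef, Matrix.of_apply, Matrix.cons_val_two,
      Matrix.tail_cons]
  all_goals (try ring)
  · linear_combination (a * b * (w : R) ^ 3 * (z : R) ^ 3 * (z' : R) ^ 3 * (w' : R) ^ 3 *
      (w : R) ^ 3) * hx3
  · linear_combination ((x : R) ^ 3 * ix ^ 3) * hab + hx3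
  · linear_combination -hab
  · linear_combination hab
end

section
/- Work in the commutative Laurent polynomial ring R = ℂ[w₁^{±1}, z₁^{±1}, w₂^{±1}, z₂^{±1}, w₃^{±1}, z₃^{±1}, x^{±1}], with capital letters denoting cubes (W_i = w_i³, Z_i = z_i³, X = x³). For variables (w,z,w′,z′,x) define the 3×3 matrices L(w,z,w′,z′,x) = (w z² x z′ w′²)^{-1}·[[WZXZ′W′, WZXW′+WZW′, WZ],[0, ZW′, Z],[0,0,1]] and R̂(w,z,w′,z′,x) = (w′ z′² x^{-1} z w²)^{-1}·[[W′Z′ZW, 0, 0],[Z′ZW, Z′W, 0],[ZW, W + X^{-1}W, X^{-1}]], and let J = [[0,0,1],[0,−1,0],[1,0,0]]. Then R̂(w₃,z₃,w₁,z₁,x) · J · R̂(w₂,z₂,w₃,z₃,x) = L(w₁,z₁,w₂,z₂,x) in M_3(R). (This is the classical q = 1 form of the SL_3 Move (II) identity: two right turns joined by a U-turn equal a left turn.) -/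
/-- The classical `q = 1` form of the `SL₃` Move (II) identity: two right turns joined by
a U-turn equal a left turn:
`R(w₃,z₃,w₁,z₁,x) · J · R(w₂,z₂,w₃,z₃,x) = L(w₁,z₁,w₂,z₂,x)` where
`J = [[0,0,1],[0,-1,0],[1,0,0]]` is the classical U-turn matrix. -/
theorem sl3_move_II_classical (R : Type*) [CommRing R]
    (w1 z1 w2 z2 w3 z3 x : Rˣ) :
    Rmat R w3 z3 w1 z1 x * !![0, 0, 1; 0, -1, 0; 1, 0, 0] * Rmat R w2 z2 w3 z3 x
      = Lmat R w1 z1 w2 z2 x := by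
  have hx : (x : R) * ((x⁻¹ : Rˣ) : R) = 1 := by
    rw [← Units.val_mul, mul_inv_cancel]; rfl
  have ha1 : (((w1 * z1 ^ 2 * x⁻¹ * z3 * w3 ^ 2)⁻¹ : Rˣ) : R)
      * ((w1 : R) * (z1 : R) ^ 2 * ((x⁻¹ : Rˣ) : R) * (z3 : R) * (w3 : R) ^ 2) = 1 := by
    rw [show (w1 : R) * (z1 : R) ^ 2 * ((x⁻¹ : Rˣ) : R) * (z3 : R) * (w3 : R) ^ 2
        = ((w1 * z1 ^ 2 * x⁻¹ * z3 * w3 ^ 2 : Rˣ) : R) by push_cast; ring,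
       ← Units.val_mul, inv_mul_cancel, Units.val_one]
  have ha2 : (((w3 * z3 ^ 2 * x⁻¹ * z2 * w2 ^ 2)⁻¹ : Rˣ) : R)
      * ((w3 : R) * (z3 : R) ^ 2 * ((x⁻¹ : Rˣ) : R) * (z2 : R) * (w2 : R) ^ 2) = 1 := by
    rw [show (w3 : R) * (z3 : R) ^ 2 * ((x⁻¹ : Rˣ) : R) * (z2 : R) * (w2 : R) ^ 2
        = ((w3 * z3 ^ 2 * x⁻¹ * z2 * w2 ^ 2 : Rˣ) : R) by push_cast; ring,
       ← Units.val_mul, inv_mul_cancel, Units.val_one]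
  have ha3 : (((w1 * z1 ^ 2 * x * z2 * w2 ^ 2)⁻¹ : Rˣ) : R)
      * ((w1 : R) * (z1 : R) ^ 2 * (x : R) * (z2 : R) * (w2 : R) ^ 2) = 1 := by
    rw [show (w1 : R) * (z1 : R) ^ 2 * (x : R) * (z2 : R) * (w2 : R) ^ 2
        = ((w1 * z1 ^ 2 * x * z2 * w2 ^ 2 : Rˣ) : R) by push_cast; ring,
       ← Units.val_mul, inv_mul_cancel, Units.val_one]
  set a : R := (w1 : R) with hadef
  set b : R := (z1 : R) with hbdef
  set c : R := (w2 : R) with hcdef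
  set d : R := (z2 : R) with hddef
  set e : R := (w3 : R) with hedef
  set f : R := (z3 : R) with hfdef
  set g : R := (x : R) with hgdef
  set ix : R := ((x⁻¹ : Rˣ) : R) with hixdef
  set a1 : R := (((w1 * z1 ^ 2 * x⁻¹ * z3 * w3 ^ 2)⁻¹ : Rˣ) : R) with ha1def
  set a2 : R := (((w3 * z3 ^ 2 * x⁻¹ * z2 * w2 ^ 2)⁻¹ : Rˣ) : R) with ha2def
  set a3 : R := (((w1 * z1 ^ 2 * x * z2 * w2 ^ 2)⁻¹ : Rˣ) : R) with ha3def
  have hs : a1 * a2 * (f ^ 3 * e ^ 3 * ix ^ 3) = a3 := by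
    linear_combination (a2 * (e * f ^ 2 * ix * d * c ^ 2) * ix * g * a3) * ha1
      + (ix * g * a3) * ha2
      + (-(a1 * a2 * (f ^ 3 * e ^ 3 * ix ^ 3))) * ha3 + a3 * hx
  unfold Rmat Lmat
  rw [← hadef, ← hbdef, ← hcdef, ← hddef, ← hedef, ← hfdef, ← hgdef, ← hixdef,
    ← ha1def, ← ha2def, ← ha3def]
  ext i j
  fin_cases i <;> fin_cases j <;>
    simp [Matrix.mul_apply, Fin.sum_univ_three, Matrix.vecHead, Matrix.vecTail]
  · linear_combination (a1 * a2 * (-(a ^ 3 * b ^ 3 * f ^ 3 * e ^ 3 * d ^ 3 * c ^ 3)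
        * (g ^ 2 * ix ^ 2 + g * ix + 1))) * hx
      + (a ^ 3 * b ^ 3 * g ^ 3 * d ^ 3 * c ^ 3) * hs
  · linear_combination (a1 * a2 * (-(a ^ 3 * b ^ 3 * f ^ 3 * e ^ 3 * c ^ 3)
        * (g ^ 2 * ix ^ 2 + g * ix + 1))) * hx
      + (a ^ 3 * b ^ 3 * g ^ 3 * c ^ 3 + a ^ 3 * b ^ 3 * c ^ 3) * hs
  · linear_combination (a ^ 3 * b ^ 3) * hs
  · ring
  · linear_combination (b ^ 3 * c ^ 3) * hs
  · linear_combination (b ^ 3) * hs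
  · ring
  · ring
  · linear_combination hs
end
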